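/- Hamiltonian coefficient criterion: with a = (1/2)(θ²−1/3)λ, b = (1/2)(θ²−1/3)(1−λ), c = (1/2)(1−θ²)μ, d = (1/2)(1−θ²)(1−μ), γ1 = (1/2)(b+d−ρ), γ2 = (1/2)(a+c+ρ), γ = (1/24)[5 − 9(b+d) + 9ρ], and δ1, δ2 defined from a, b, c, d, a1, b1, c1, d1, ρ by δ1 = (1/4)[2(b1+d1) − (b−d+ρ)(1/6−a−d) − d(c−a+ρ)] and δ2 = (1/4)[2(a1+c1) − (c−a+ρ)(1/6−a) + ρ/3] (where a1, b1, c1, d1 are given by a1 = −(1/4)(θ²−1/3)²(1−λ) + (5/24)(θ²−1/5)²λ1, b1 = −(5/24)(θ²−1/5)²(1−λ1), c1 = (5/24)(1−θ²)(θ²−1/5)(1−μ1), d1 = −(1/4)(1−θ²)²μ − (5/24)(1−θ²)(θ²−1/5)μ1), the following hold for all real θ, λ, μ, λ1, μ1, ρ: (i) γ = 7/48 if and only if ρ = b + d − 1/6; (ii) if ρ = b + d − 1/6, then γ1 = γ2 = 1/12 and δ2 = δ1 + 7/180. -/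
import Mathlib


noncomputable section

/-! Coefficient formulas (abcd), (abcd1) and (gamas) from the derivation of the
fifth-order KdV–BBM equation; `θ, lam, mu, lam1, mu1, ρ` are free real parameters
(`λ, μ, λ₁, μ₁` of the paper are rendered `lam, mu, lam1, mu1`). -/

def aC (θ lam : ℝ) : ℝ := (1/2) * (θ^2 - 1/3) * lam
def bC (θ lam : ℝ) : ℝ := (1/2) * (θ^2 - 1/3) * (1 - lam)
def cC (θ mu : ℝ) : ℝ := (1/2) * (1 - θ^2) * mu
def dC (θ mu : ℝ) : ℝ := (1/2) * (1 - θ^2) * (1 - mu)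
def a1C (θ lam lam1 : ℝ) : ℝ :=
  -(1/4) * (θ^2 - 1/3)^2 * (1 - lam) + (5/24) * (θ^2 - 1/5)^2 * lam1
def b1C (θ lam1 : ℝ) : ℝ := -(5/24) * (θ^2 - 1/5)^2 * (1 - lam1)
def c1C (θ mu1 : ℝ) : ℝ := (5/24) * (1 - θ^2) * (θ^2 - 1/5) * (1 - mu1)
def d1C (θ mu mu1 : ℝ) : ℝ :=
  -(1/4) * (1 - θ^2)^2 * mu - (5/24) * (1 - θ^2) * (θ^2 - 1/5) * mu1

def γ1C (θ lam mu ρ : ℝ) : ℝ := (1/2) * (bC θ lam + dC θ mu - ρ)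
def γ2C (θ lam mu ρ : ℝ) : ℝ := (1/2) * (aC θ lam + cC θ mu + ρ)
def δ1C (θ lam mu lam1 mu1 ρ : ℝ) : ℝ :=
  (1/4) * (2 * (b1C θ lam1 + d1C θ mu mu1)
    - (bC θ lam - dC θ mu + ρ) * (1/6 - aC θ lam - dC θ mu)
    - dC θ mu * (cC θ mu - aC θ lam + ρ))
def δ2C (θ lam mu lam1 mu1 ρ : ℝ) : ℝ :=
  (1/4) * (2 * (a1C θ lam lam1 + c1C θ mu1)
    - (cC θ mu - aC θ lam + ρ) * (1/6 - aC θ lam) + ρ/3)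
def γC (θ lam mu ρ : ℝ) : ℝ := (1/24) * (5 - 9 * (bC θ lam + dC θ mu) + 9 * ρ)

/-- **Hamiltonian coefficient criterion**: (i) `γ = 7/48` iff `ρ = b + d − 1/6`;
(ii) if `ρ = b + d − 1/6` then `γ1 = γ2 = 1/12` and `δ2 = δ1 + 7/180`. -/
theorem hamiltonian_coefficient_criterion (θ lam mu lam1 mu1 ρ : ℝ) :
    (γC θ lam mu ρ = 7/48 ↔ ρ = bC θ lam + dC θ mu - 1/6) ∧
    (ρ = bC θ lam + dC θ mu - 1/6 →
      γ1C θ lam mu ρ = 1/12 ∧ γ2C θ lam mu ρ = 1/12 ∧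
      δ2C θ lam mu lam1 mu1 ρ = δ1C θ lam mu lam1 mu1 ρ + 7/180) := by
  constructor
  · unfold γC bC dC
    constructor <;> intro h <;> linarith
  · intro h
    subst h
    refine ⟨by unfold γ1C bC dC; ring, by unfold γ2C aC bC cC dC; ring, ?_⟩
    unfold δ1C δ2C a1C b1C c1C d1C bC dC aC cC
    ring
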